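/- (Derandomization lemma.) Let θ and Γ be finite sets, μ a probability distribution on Γ, and c > 0. For every n ∈ ℕ, every probability distribution q on θ and every s^n ∈ θ^n, let a function I_{q,s^n} : Γ → [0,c] be given. Assume there is a function f : (0,∞) → (0,∞) with f(δ) → 0 as δ → 0 such that for every γ ∈ Γ, every n, every s^n ∈ θ^n and all probability distributions q, q' on θ with ‖q − q'‖₁ ≤ δ: |I_{q,s^n}(γ) − I_{q',s^n}(γ)| ≤ f(δ). Write μ(I_{q,s^n}) := ∑_{γ∈Γ} μ(γ)·I_{q,s^n}(γ). Then for every ε > 0 there is N such that for all n ≥ N there exist L = n² elements γ₁,…,γ_L ∈ Γ with (1/L)·∑_{l=1}^L I_{q,s^n}(γ_l) ≥ (1−ε)·μ(I_{q,s^n}) − ε simultaneously for every probability distribution q on θ and every s^n ∈ θ^n. -/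

import Mathlib

/-!
Choose δ with f δ < ε/3 and a finite δ-net of the probability simplex in ℓ¹; by the continuity
hypothesis a tuple that is good for every q in the net is good for every q, at a loss of 2 f δ.
For each of the |net| · |θ|ⁿ pairs (q, sⁿ), a Chernoff bound shows that the empirical mean of n²
i.i.d. samples from μ falls below the μ-mean minus ε/3 with probability at most
exp(-n² ε² / (36 c²)). This beats the number |θ|ⁿ of pairs, so for large n the union bound leaves
a tuple γ₁, …, γ_{n²} that is good for all pairs simultaneously.
-/

open scoped BigOperators

noncomputable section

/-- A probability distribution on a finite type. -/
def IsProbDist {α : Type*} [Fintype α] (p : α → ℝ) : Prop :=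
  (∀ a, 0 ≤ p a) ∧ ∑ a, p a = 1

open Finset Real Filter

lemma exp_neg_le_one_sub_add_sq {u : ℝ} (hu : 0 ≤ u) : exp (-u) ≤ 1 - u + u ^ 2 := by
  have h : exp (-u) * exp u = 1 := by rw [← exp_add, neg_add_cancel, exp_zero]
  nlinarith [add_one_le_exp u, exp_pos (-u), sq_nonneg u]

section Chernoff

variable {Γ : Type*} [Fintype Γ] {μ : Γ → ℝ}

lemma sum_mul_exp_neg_le_exp (hμ : IsProbDist μ) {c t : ℝ} (ht : 0 ≤ t) {X : Γ → ℝ}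
    (hX : ∀ γ, X γ ∈ Set.Icc 0 c) :
    ∑ γ, μ γ * exp (-(t * X γ)) ≤ exp (-(t * ∑ γ, μ γ * X γ) + t ^ 2 * c ^ 2) := by
  have hpoint : ∀ γ, exp (-(t * X γ)) ≤ 1 - t * X γ + t ^ 2 * c ^ 2 := fun γ => by
    have hXc : X γ ^ 2 ≤ c ^ 2 := pow_le_pow_left₀ (hX γ).1 (hX γ).2 2
    nlinarith [exp_neg_le_one_sub_add_sq (mul_nonneg ht (hX γ).1), sq_nonneg t]
  calc ∑ γ, μ γ * exp (-(t * X γ))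
      ≤ ∑ γ, μ γ * (1 - t * X γ + t ^ 2 * c ^ 2) :=
        sum_le_sum fun γ _ => mul_le_mul_of_nonneg_left (hpoint γ) (hμ.1 γ)
    _ = -(t * ∑ γ, μ γ * X γ) + t ^ 2 * c ^ 2 + 1 := by
        have hterm : ∀ γ, μ γ * (1 - t * X γ + t ^ 2 * c ^ 2) =
            (t ^ 2 * c ^ 2 + 1) * μ γ - t * (μ γ * X γ) := fun γ => by ring
        simp only [hterm, sum_sub_distrib, ← mul_sum, hμ.2]
        ring
    _ ≤ _ := add_one_le_exp _

-- Exponential Markov inequality: `∏ l, μ (v l)` is the law of `L` i.i.d. samples from `μ`.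
lemma sum_prod_filter_sum_lt_le (hμ0 : ∀ γ, 0 ≤ μ γ) (X : Γ → ℝ) {t : ℝ} (ht : 0 ≤ t)
    (a : ℝ) (L : ℕ) :
    ∑ v ∈ univ.filter (fun v : Fin L → Γ => ∑ l, X (v l) < L * a), ∏ l, μ (v l) ≤
      exp (t * (L * a)) * (∑ γ, μ γ * exp (-(t * X γ))) ^ L := by
  rw [Fintype.sum_pow, mul_sum]
  refine (sum_le_sum fun v hv => ?_).trans
    (sum_le_sum_of_subset_of_nonneg (filter_subset _ _) fun v _ _ =>
      mul_nonneg (exp_pos _).le (prod_nonneg fun l _ => mul_nonneg (hμ0 _) (exp_pos _).le))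
  have hexp : 1 ≤ exp (t * (L * a - ∑ l, X (v l))) :=
    one_le_exp (mul_nonneg ht (sub_nonneg.2 (mem_filter.1 hv).2.le))
  calc ∏ l, μ (v l) ≤ exp (t * (L * a - ∑ l, X (v l))) * ∏ l, μ (v l) :=
        le_mul_of_one_le_left (prod_nonneg fun l _ => hμ0 _) hexp
    _ = exp (t * (L * a)) * ∏ l, μ (v l) * exp (-(t * X (v l))) := by
        rw [prod_mul_distrib, ← exp_sum, mul_left_comm, ← exp_add, mul_comm]
        congr 2
        rw [sum_neg_distrib, ← mul_sum]
        ring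

lemma sum_prod_filter_sum_lt_sub_le (hμ : IsProbDist μ) {c : ℝ} (hc : 0 < c) {X : Γ → ℝ}
    (hX : ∀ γ, X γ ∈ Set.Icc 0 c) {e : ℝ} (he : 0 ≤ e) (L : ℕ) :
    ∑ v ∈ univ.filter
        (fun v : Fin L → Γ => ∑ l, X (v l) < L * (∑ γ, μ γ * X γ - e)), ∏ l, μ (v l) ≤
      exp (-(e ^ 2 / (4 * c ^ 2) * L)) := by
  -- the optimal Chernoff parameter for the quadratic bound on the moment generating function
  set t := e / (2 * c ^ 2)
  have ht : 0 ≤ t := by positivity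
  refine (sum_prod_filter_sum_lt_le hμ.1 X ht _ L).trans ?_
  calc exp (t * (L * (∑ γ, μ γ * X γ - e))) * (∑ γ, μ γ * exp (-(t * X γ))) ^ L
      ≤ exp (t * (L * (∑ γ, μ γ * X γ - e))) *
          exp (-(t * ∑ γ, μ γ * X γ) + t ^ 2 * c ^ 2) ^ L := by
        gcongr
        · exact sum_nonneg fun γ _ => mul_nonneg (hμ.1 γ) (exp_pos _).le
        · exact sum_mul_exp_neg_le_exp hμ ht hX
    _ = exp (-(e ^ 2 / (4 * c ^ 2) * L)) := by
        rw [← exp_nat_mul, ← exp_add]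
        congr 1
        simp only [t]
        field_simp
        ring

end Chernoff

lemma exists_forall_not_of_sum_sum_filter_lt_one {α ι : Type*} [Fintype α] {w : α → ℝ}
    (hw : IsProbDist w) (P : Finset ι) (bad : ι → α → Prop) [∀ i, DecidablePred (bad i)]
    (h : ∑ i ∈ P, ∑ a ∈ univ.filter (bad i), w a < 1) : ∃ a, ∀ i ∈ P, ¬ bad i a := by
  by_contra! hcover
  refine h.not_ge ?_
  calc (1 : ℝ) = ∑ a, w a := hw.2.symm
    _ ≤ ∑ a, ∑ i ∈ P, if bad i a then w a else 0 := sum_le_sum fun a _ => by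
        obtain ⟨i, hi, hbad⟩ := hcover a
        simpa [hbad] using single_le_sum (f := fun i => if bad i a then w a else 0)
          (fun j _ => by split_ifs <;> simp [hw.1 a]) hi
    _ = ∑ i ∈ P, ∑ a ∈ univ.filter (bad i), w a := by
        rw [sum_comm]
        simp only [sum_filter]

lemma exists_tuple_forall_mul_sub_le_sum {Γ ι : Type*} [Fintype Γ] {μ : Γ → ℝ}
    (hμ : IsProbDist μ) {c : ℝ} (hc : 0 < c) (P : Finset ι) {X : ι → Γ → ℝ}
    (hX : ∀ i ∈ P, ∀ γ, X i γ ∈ Set.Icc 0 c) {e : ℝ} (he : 0 ≤ e) (L : ℕ)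
    (hL : P.card * exp (-(e ^ 2 / (4 * c ^ 2) * L)) < 1) :
    ∃ v : Fin L → Γ, ∀ i ∈ P, L * (∑ γ, μ γ * X i γ - e) ≤ ∑ l, X i (v l) := by
  classical
  have hw : IsProbDist fun v : Fin L → Γ => ∏ l, μ (v l) :=
    ⟨fun v => prod_nonneg fun l _ => hμ.1 _, by rw [← Fintype.sum_pow, hμ.2, one_pow]⟩
  obtain ⟨v, hv⟩ := exists_forall_not_of_sum_sum_filter_lt_one hw P
    (fun i v => ∑ l, X i (v l) < L * (∑ γ, μ γ * X i γ - e)) <| by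
      refine lt_of_le_of_lt ?_ hL
      rw [← nsmul_eq_mul]
      exact sum_le_card_nsmul _ _ _ fun i hi =>
        sum_prod_filter_sum_lt_sub_le hμ hc (hX i hi) he L
  exact ⟨v, fun i hi => not_lt.1 (hv i hi)⟩

lemma exists_finset_isProbDist_forall_sum_abs_sub_le (θ : Type*) [Fintype θ] {δ : ℝ}
    (hδ : 0 < δ) : ∃ T : Finset (θ → ℝ), (∀ q ∈ T, IsProbDist q) ∧
      ∀ q, IsProbDist q → ∃ q' ∈ T, ∑ t, |q t - q' t| ≤ δ := by
  set r := δ / (Fintype.card θ + 1)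
  obtain ⟨T, hTS, hTfin, hcover⟩ := (isCompact_stdSimplex ℝ θ).finite_cover_balls
    (e := r) (by positivity)
  refine ⟨hTfin.toFinset, fun q hq => hTS (hTfin.mem_toFinset.1 hq), fun q hq => ?_⟩
  obtain ⟨q', hq'T, hqq'⟩ := Set.mem_iUnion₂.1 (hcover hq)
  refine ⟨q', hTfin.mem_toFinset.2 hq'T, ?_⟩
  calc ∑ t, |q t - q' t| ≤ (univ : Finset θ).card • r :=
        sum_le_card_nsmul _ _ _ fun t _ =>
          (dist_le_pi_dist q q' t).trans (Metric.mem_ball.1 hqq').le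
    _ ≤ δ := by
        rw [nsmul_eq_mul, card_univ, ← mul_div_assoc, div_le_iff₀ (by positivity)]
        nlinarith

lemma tendsto_pow_mul_exp_neg_mul_sq {B a : ℝ} (hB : 0 < B) (ha : 0 < a) :
    Tendsto (fun n : ℕ => B ^ n * exp (-(a * n ^ 2))) atTop (nhds 0) := by
  have hexp : ∀ n : ℕ, B ^ n * exp (-(a * n ^ 2)) = exp (n * (log B - a * n)) := fun n => by
    rw [← exp_log hB, ← exp_nat_mul, exp_log hB, ← exp_add]
    ring_nf
  simp only [hexp]
  have hn := tendsto_natCast_atTop_atTop (R := ℝ)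
  exact tendsto_exp_atBot.comp <| hn.atTop_mul_atBot₀ <|
    tendsto_atBot_add_const_left _ _ (tendsto_neg_atTop_atBot.comp (hn.const_mul_atTop ha))

lemma mul_sub_sub_le_sum_of_abs_sub_le {Γ : Type*} [Fintype Γ] {μ : Γ → ℝ} (hμ : IsProbDist μ)
    {X Y : Γ → ℝ} {η : ℝ} (hXY : ∀ γ, |X γ - Y γ| ≤ η) {L : ℕ} (v : Fin L → Γ) {e : ℝ}
    (hY : L * (∑ γ, μ γ * Y γ - e) ≤ ∑ l, Y (v l)) :
    L * (∑ γ, μ γ * X γ - e - 2 * η) ≤ ∑ l, X (v l) := by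
  have hmean : ∑ γ, μ γ * X γ ≤ ∑ γ, μ γ * Y γ + η := by
    calc ∑ γ, μ γ * X γ ≤ ∑ γ, μ γ * (Y γ + η) :=
          sum_le_sum fun γ _ => mul_le_mul_of_nonneg_left
            (by linarith [(abs_le.1 (hXY γ)).2]) (hμ.1 γ)
      _ = ∑ γ, μ γ * Y γ + η := by
          simp only [mul_add, sum_add_distrib, ← sum_mul, hμ.2, one_mul]
  have hsample : ∑ l, Y (v l) ≤ ∑ l, X (v l) + L * η := by
    calc ∑ l, Y (v l) ≤ ∑ l, (X (v l) + η) :=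
          sum_le_sum fun l _ => by linarith [(abs_le.1 (hXY (v l))).1]
      _ = ∑ l, X (v l) + L * η := by simp [sum_add_distrib]
  have hL : (0 : ℝ) ≤ L := L.cast_nonneg
  nlinarith

theorem derandomization_lemma
    {θ Γ : Type*} [Fintype θ] [Fintype Γ]
    (μ : Γ → ℝ) (hμ : IsProbDist μ) (c : ℝ) (hc : 0 < c)
    (I : (n : ℕ) → (θ → ℝ) → (Fin n → θ) → Γ → ℝ)
    (hrange : ∀ (n : ℕ) (q : θ → ℝ), IsProbDist q → ∀ (s : Fin n → θ) (γ : Γ),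
      I n q s γ ∈ Set.Icc (0 : ℝ) c)
    (f : ℝ → ℝ)
    (hf : Filter.Tendsto f (nhdsWithin 0 (Set.Ioi 0)) (nhds 0))
    (hLip : ∀ (γ : Γ) (n : ℕ) (s : Fin n → θ) (q q' : θ → ℝ), IsProbDist q → IsProbDist q' →
      ∀ δ > (0 : ℝ), (∑ t, |q t - q' t|) ≤ δ → |I n q s γ - I n q' s γ| ≤ f δ) :
    ∀ ε > (0 : ℝ), ∃ N : ℕ, ∀ n ≥ N, ∃ γs : Fin (n ^ 2) → Γ,
      ∀ (q : θ → ℝ), IsProbDist q → ∀ s : Fin n → θ,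
        (1 - ε) * (∑ γ, μ γ * I n q s γ) - ε ≤
          (1 / (n ^ 2) : ℝ) * ∑ l, I n q s (γs l) := by
  intro ε hε
  obtain ⟨δ, hfδ, hδ⟩ : ∃ δ, f δ < ε / 3 ∧ 0 < δ :=
    ((hf.eventually (gt_mem_nhds (by positivity))).and self_mem_nhdsWithin).exists
  obtain ⟨T, hTprob, hTnet⟩ := exists_finset_isProbDist_forall_sum_abs_sub_le θ hδ
  have hsmall : ∀ᶠ n : ℕ in atTop,
      (T.card : ℝ) * ((Fintype.card θ + 1) ^ n * exp (-((ε / 3) ^ 2 / (4 * c ^ 2) * n ^ 2))) < 1 :=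
    ((tendsto_pow_mul_exp_neg_mul_sq (by positivity) (by positivity)).const_mul _).eventually
      (gt_mem_nhds (by simp))
  obtain ⟨N, hN⟩ := eventually_atTop.1 (hsmall.and (eventually_gt_atTop 0))
  refine ⟨N, fun n hn => ?_⟩
  obtain ⟨hcard, hn0⟩ := hN n hn
  obtain ⟨γs, hγs⟩ := exists_tuple_forall_mul_sub_le_sum hμ hc (T ×ˢ univ)
    (X := fun p : (θ → ℝ) × (Fin n → θ) => I n p.1 p.2)
    (fun p hp => hrange n p.1 (hTprob _ (mem_product.1 hp).1) p.2) (e := ε / 3) (by positivity)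
    (n ^ 2) <| by
      refine lt_of_le_of_lt ?_ hcard
      rw [card_product, card_univ, Fintype.card_fun, Fintype.card_fin, ← mul_assoc]
      push_cast
      gcongr
      linarith
  refine ⟨γs, fun q hq s => ?_⟩
  obtain ⟨q', hq'T, hqq'⟩ := hTnet q hq
  have hclose := mul_sub_sub_le_sum_of_abs_sub_le hμ
    (fun γ => hLip γ n s q q' hq (hTprob q' hq'T) δ hδ hqq') γs
    (hγs (q', s) (mem_product.2 ⟨hq'T, mem_univ s⟩))
  have hmean : 0 ≤ ∑ γ, μ γ * I n q s γ :=
    sum_nonneg fun γ _ => mul_nonneg (hμ.1 γ) (hrange n q hq s γ).1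
  have hslack : (1 - ε) * ∑ γ, μ γ * I n q s γ - ε ≤ ∑ γ, μ γ * I n q s γ - ε / 3 - 2 * f δ := by
    nlinarith [mul_nonneg hε.le hmean]
  push_cast at hclose
  rw [one_div_mul_eq_div, le_div_iff₀ (by positivity)]
  nlinarith [mul_le_mul_of_nonneg_right hslack (sq_nonneg (n : ℝ))]

end
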